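/- Let (T, μ, θ) be a faithfully flat quantum torsor over k and Z = (B ⊗ T)^{co B}, a subalgebra of T^op ⊗ T ⊗ T^op. The map S_T : T → Z^op, x ↦ θ(x^(3)) ⊗ x^(2) ⊗ θ(x^(1)), is an algebra morphism: S_T(xy) = S_T(y)·S_T(x) in Z and S_T(1) = 1 ⊗ 1 ⊗ 1. -/

import Mathlib

open TensorProduct

namespace Torsor

variable (k : Type*) [CommRing k] (T : Type*) [Ring T] [Algebra k T]

/-- Rearrangement `a ⊗ (b ⊗ c) ↦ b ⊗ (a ⊗ c)` for right-nested triple tensor products. -/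
noncomputable def sw (M N P : Type*) [AddCommGroup M] [AddCommGroup N] [AddCommGroup P]
    [Module k M] [Module k N] [Module k P] :
    M ⊗[k] (N ⊗[k] P) ≃ₗ[k] N ⊗[k] (M ⊗[k] P) :=
  (TensorProduct.assoc k M N P).symm ≪≫ₗ
    (TensorProduct.congr (TensorProduct.comm k M N) (LinearEquiv.refl k P)) ≪≫ₗ
    TensorProduct.assoc k N M P

/-- The linear identification `T ⊗ T ⊗ T ≅ T ⊗ T^op ⊗ T`. -/
noncomputable def e3 : T ⊗[k] (T ⊗[k] T) ≃ₗ[k] T ⊗[k] (Tᵐᵒᵖ ⊗[k] T) :=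
  TensorProduct.congr (LinearEquiv.refl k T)
    (TensorProduct.congr (MulOpposite.opLinearEquiv k) (LinearEquiv.refl k T))

/-- The multiplication of the algebra `T ⊗ T^op ⊗ T`, transported to `T ⊗ T ⊗ T`. -/
noncomputable def mulMidOp (u v : T ⊗[k] (T ⊗[k] T)) : T ⊗[k] (T ⊗[k] T) :=
  (e3 k T).symm ((e3 k T) u * (e3 k T) v)

/-- Reversal `a ⊗ b ⊗ c ↦ c ⊗ b ⊗ a` of a triple tensor product. -/
noncomputable def rev3 : T ⊗[k] (T ⊗[k] T) →ₗ[k] T ⊗[k] (T ⊗[k] T) :=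
  (TensorProduct.map LinearMap.id (TensorProduct.comm k T T).toLinearMap) ∘ₗ
    (TensorProduct.comm k (T ⊗[k] T) T).toLinearMap ∘ₗ
    (TensorProduct.assoc k T T T).symm.toLinearMap

/-- Expansion of the first leg of `T ⊗ (T ⊗ T)` by a map `ν : T → T ⊗ T ⊗ T`. -/
noncomputable def expandFirst (ν : T →ₗ[k] T ⊗[k] (T ⊗[k] T)) :
    T ⊗[k] (T ⊗[k] T) →ₗ[k] T ⊗[k] (T ⊗[k] (T ⊗[k] (T ⊗[k] T))) :=
  (TensorProduct.map LinearMap.id (TensorProduct.assoc k T T (T ⊗[k] T)).toLinearMap) ∘ₗ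
    (TensorProduct.assoc k T (T ⊗[k] T) (T ⊗[k] T)).toLinearMap ∘ₗ
    (TensorProduct.map ν LinearMap.id)

/-- Expansion of the last leg of `T ⊗ (T ⊗ T)` by a map `ν : T → T ⊗ T ⊗ T`. -/
noncomputable def expandLast (ν : T →ₗ[k] T ⊗[k] (T ⊗[k] T)) :
    T ⊗[k] (T ⊗[k] T) →ₗ[k] T ⊗[k] (T ⊗[k] (T ⊗[k] (T ⊗[k] T))) :=
  TensorProduct.map LinearMap.id (TensorProduct.map LinearMap.id ν)

/-- Expansion of the first leg of `T ⊗ T` by a map `ν : T → T ⊗ T ⊗ T`. -/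
noncomputable def inner (ν : T →ₗ[k] T ⊗[k] (T ⊗[k] T)) :
    T ⊗[k] T →ₗ[k] T ⊗[k] (T ⊗[k] (T ⊗[k] T)) :=
  (TensorProduct.map LinearMap.id (TensorProduct.assoc k T T T).toLinearMap) ∘ₗ
    (TensorProduct.assoc k T (T ⊗[k] T) T).toLinearMap ∘ₗ
    (TensorProduct.map ν LinearMap.id)

/-- Expansion of the middle leg of `T ⊗ (T ⊗ T)` by a map `ν : T → T ⊗ T ⊗ T`. -/
noncomputable def expandMid (ν : T →ₗ[k] T ⊗[k] (T ⊗[k] T)) :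
    T ⊗[k] (T ⊗[k] T) →ₗ[k] T ⊗[k] (T ⊗[k] (T ⊗[k] (T ⊗[k] T))) :=
  TensorProduct.map LinearMap.id (inner k T ν)

/-- A quantum torsor structure on the `k`-algebra `T`: an algebra morphism
`μ : T → T ⊗ T^op ⊗ T` (encoded as a linear map to `T ⊗ T ⊗ T` which is unital and
multiplicative for the `T ⊗ T^op ⊗ T` product) satisfying the counit laws
`(m ⊗ T)∘μ(x) = 1 ⊗ x`, `(T ⊗ m)∘μ(x) = x ⊗ 1` and coassociativity, together with an
algebra endomorphism `θ` satisfying Grunspan's torsor-endomorphism law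
`x^(1) ⊗ x^(2) ⊗ θ(x^(3)) ⊗ x^(4) ⊗ x^(5) = x^(1) ⊗ x^(2)^(3) ⊗ x^(2)^(2) ⊗ x^(2)^(1) ⊗ x^(3)`. -/
structure _root_.QuantumTorsor where
  μ : T →ₗ[k] T ⊗[k] (T ⊗[k] T)
  θ : T →ₐ[k] T
  μ_one : μ 1 = 1 ⊗ₜ[k] (1 ⊗ₜ[k] 1)
  μ_mul : ∀ x y : T, μ (x * y) = mulMidOp k T (μ x) (μ y)
  counit_left : (TensorProduct.map (LinearMap.mul' k T) LinearMap.id) ∘ₗ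
      (TensorProduct.assoc k T T T).symm.toLinearMap ∘ₗ μ = (TensorProduct.mk k T T) 1
  counit_right : (TensorProduct.map LinearMap.id (LinearMap.mul' k T)) ∘ₗ μ
      = (TensorProduct.mk k T T).flip 1
  coassoc : (expandLast k T μ) ∘ₗ μ = (expandFirst k T μ) ∘ₗ μ
  theta_law :
    (TensorProduct.map LinearMap.id
        (TensorProduct.map LinearMap.id (TensorProduct.map θ.toLinearMap LinearMap.id))) ∘ₗ
      (expandLast k T μ) ∘ₗ μ
    = (expandMid k T ((rev3 k T) ∘ₗ μ)) ∘ₗ μ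

variable {k T}

/-- The defining submodule of the Hopf algebra `A = H_l(T) ⊆ T ⊗ T^op`:
elements with `Σ x^(1) ⊗ x^(2) ⊗ θ(x^(3)) ⊗ y = Σ x ⊗ y^(3) ⊗ y^(2) ⊗ y^(1)`. -/
noncomputable def subA (qt : QuantumTorsor k T) : Submodule k (T ⊗[k] T) :=
  LinearMap.eqLocus
    (((TensorProduct.map LinearMap.id
        (TensorProduct.map LinearMap.id (TensorProduct.map qt.θ.toLinearMap LinearMap.id))) ∘ₗ
      (inner k T qt.μ)))
    (TensorProduct.map LinearMap.id ((rev3 k T) ∘ₗ qt.μ))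

/-- The defining submodule of the Hopf algebra `B = H_r(T) ⊆ T^op ⊗ T`:
elements with `Σ x ⊗ θ(y^(1)) ⊗ y^(2) ⊗ y^(3) = Σ x^(3) ⊗ x^(2) ⊗ x^(1) ⊗ y`. -/
noncomputable def subB (qt : QuantumTorsor k T) : Submodule k (T ⊗[k] T) :=
  LinearMap.eqLocus
    (TensorProduct.map LinearMap.id
        ((TensorProduct.map qt.θ.toLinearMap LinearMap.id) ∘ₗ qt.μ))
    (inner k T ((rev3 k T) ∘ₗ qt.μ))

/-- The image of `B ⊗ T` inside `T ⊗ T ⊗ T`. -/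
noncomputable def subBT (qt : QuantumTorsor k T) : Submodule k (T ⊗[k] (T ⊗[k] T)) :=
  Submodule.map (TensorProduct.assoc k T T T).toLinearMap
    (LinearMap.range (TensorProduct.map (subB qt).subtype (LinearMap.id (R := k) (M := T))))

/-- The image of `T ⊗ A` inside `T ⊗ T ⊗ T`. -/
noncomputable def subTA (qt : QuantumTorsor k T) : Submodule k (T ⊗[k] (T ⊗[k] T)) :=
  LinearMap.range (TensorProduct.map (LinearMap.id (R := k) (M := T)) (subA qt).subtype)

/-- The left-hand side of the right `B`-coinvariance condition on `B ⊗ T`: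
`x ⊗ y ⊗ z ↦ x ⊗ y ⊗ z^(1) ⊗ z^(2) ⊗ z^(3)`. -/
noncomputable def eq1L (qt : QuantumTorsor k T) :
    T ⊗[k] (T ⊗[k] T) →ₗ[k] T ⊗[k] (T ⊗[k] (T ⊗[k] (T ⊗[k] T))) :=
  TensorProduct.map LinearMap.id (TensorProduct.map LinearMap.id qt.μ)

/-- The right-hand side of the right `B`-coinvariance condition on `B ⊗ T`:
`x ⊗ y ⊗ z ↦ x ⊗ y^(1) ⊗ z ⊗ θ(y^(3)) ⊗ y^(2)`. -/
noncomputable def eq1R (qt : QuantumTorsor k T) :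
    T ⊗[k] (T ⊗[k] T) →ₗ[k] T ⊗[k] (T ⊗[k] (T ⊗[k] (T ⊗[k] T))) :=
  (TensorProduct.map LinearMap.id
      ((TensorProduct.map LinearMap.id
          ((TensorProduct.map LinearMap.id (TensorProduct.comm k T T).toLinearMap) ∘ₗ
            (TensorProduct.comm k (T ⊗[k] T) T).toLinearMap)) ∘ₗ
        (TensorProduct.assoc k T (T ⊗[k] T) T).toLinearMap)) ∘ₗ
    (TensorProduct.map LinearMap.id
      (TensorProduct.map
        (TensorProduct.map LinearMap.id (TensorProduct.map LinearMap.id qt.θ.toLinearMap))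
        LinearMap.id)) ∘ₗ
    (TensorProduct.map LinearMap.id (TensorProduct.map qt.μ LinearMap.id))

/-- The left-hand side of the left `A`-coinvariance condition on `T ⊗ A`:
`x ⊗ y ⊗ z ↦ x^(1) ⊗ x^(2) ⊗ x^(3) ⊗ y ⊗ z`. -/
noncomputable def eq2L (qt : QuantumTorsor k T) :
    T ⊗[k] (T ⊗[k] T) →ₗ[k] T ⊗[k] (T ⊗[k] (T ⊗[k] (T ⊗[k] T))) :=
  expandFirst k T qt.μ

/-- The right-hand side of the left `A`-coinvariance condition on `T ⊗ A`:
`x ⊗ y ⊗ z ↦ y^(2) ⊗ θ(y^(1)) ⊗ x ⊗ y^(3) ⊗ z`. -/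
noncomputable def eq2R (qt : QuantumTorsor k T) :
    T ⊗[k] (T ⊗[k] T) →ₗ[k] T ⊗[k] (T ⊗[k] (T ⊗[k] (T ⊗[k] T))) :=
  (TensorProduct.map LinearMap.id
      (TensorProduct.map LinearMap.id (sw k T T T).toLinearMap)) ∘ₗ
    (sw k T T (T ⊗[k] (T ⊗[k] T))).toLinearMap ∘ₗ
    (TensorProduct.map LinearMap.id (TensorProduct.assoc k T T (T ⊗[k] T)).toLinearMap) ∘ₗ
    (TensorProduct.assoc k T (T ⊗[k] T) (T ⊗[k] T)).toLinearMap ∘ₗ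
    (TensorProduct.map (TensorProduct.map qt.θ.toLinearMap LinearMap.id) LinearMap.id) ∘ₗ
    (TensorProduct.map qt.μ LinearMap.id) ∘ₗ
    (sw k T T T).toLinearMap

/-- The coinvariants `(B ⊗ T)^{co B}`, as a submodule of `T ⊗ T ⊗ T`. -/
noncomputable def coinvB (qt : QuantumTorsor k T) : Submodule k (T ⊗[k] (T ⊗[k] T)) :=
  subBT qt ⊓ LinearMap.eqLocus (eq1L qt) (eq1R qt)

/-- The coinvariants `(T ⊗ A)^{co A}`, as a submodule of `T ⊗ T ⊗ T`. -/
noncomputable def coinvA (qt : QuantumTorsor k T) : Submodule k (T ⊗[k] (T ⊗[k] T)) :=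
  subTA qt ⊓ LinearMap.eqLocus (eq2L qt) (eq2R qt)

end Torsor

namespace Torsor

variable {k : Type*} [CommRing k] {T : Type*} [Ring T] [Algebra k T]

/-- The map `S_T : x ↦ θ(x^(3)) ⊗ x^(2) ⊗ θ(x^(1)) = (θ ⊗ T ⊗ θ) ∘ μ^op`. -/
noncomputable def ST (qt : QuantumTorsor k T) : T →ₗ[k] T ⊗[k] (T ⊗[k] T) :=
  (TensorProduct.map qt.θ.toLinearMap
      (TensorProduct.map LinearMap.id qt.θ.toLinearMap)) ∘ₗ (rev3 k T) ∘ₗ qt.μ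

/-- The linear identification `T ⊗ T ⊗ T ≅ T^op ⊗ T ⊗ T^op`. -/
noncomputable def eZ (k : Type*) [CommRing k] (T : Type*) [Ring T] [Algebra k T] :
    T ⊗[k] (T ⊗[k] T) ≃ₗ[k] Tᵐᵒᵖ ⊗[k] (T ⊗[k] Tᵐᵒᵖ) :=
  TensorProduct.congr (MulOpposite.opLinearEquiv k)
    (TensorProduct.congr (LinearEquiv.refl k T) (MulOpposite.opLinearEquiv k))

/-- The multiplication of the algebra `T^op ⊗ T ⊗ T^op` (the ambient algebra of
`Z = (B ⊗ T)^{co B}`), transported to `T ⊗ T ⊗ T`. -/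
noncomputable def zMul (u v : T ⊗[k] (T ⊗[k] T)) : T ⊗[k] (T ⊗[k] T) :=
  (eZ k T).symm ((eZ k T) u * (eZ k T) v)

end Torsor

set_option maxHeartbeats 1000000
set_option synthInstance.maxHeartbeats 400000

/-- For a faithfully flat quantum torsor `(T, μ, θ)` with
`Z = (B ⊗ T)^{co B} ⊆ T^op ⊗ T ⊗ T^op`, the map
`S_T : T → Z^op`, `x ↦ θ(x^(3)) ⊗ x^(2) ⊗ θ(x^(1))`, is an algebra morphism:
`S_T(x y) = S_T(y) · S_T(x)` (product in `Z`) and `S_T(1) = 1 ⊗ 1 ⊗ 1`. -/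
theorem ST_algebra_morphism_to_Zop
    (k : Type*) [CommRing k] (T : Type*) [Ring T] [Algebra k T]
    [Module.FaithfullyFlat k T] (qt : QuantumTorsor k T) :
    (∀ x y : T, Torsor.ST qt (x * y) = Torsor.zMul (Torsor.ST qt y) (Torsor.ST qt x)) ∧
      Torsor.ST qt 1 = 1 ⊗ₜ[k] (1 ⊗ₜ[k] 1) := by
  constructor
  · intro x y
    set F : T ⊗[k] (T ⊗[k] T) →ₗ[k] T ⊗[k] (T ⊗[k] T) :=
      (TensorProduct.map qt.θ.toLinearMap
        (TensorProduct.map LinearMap.id qt.θ.toLinearMap)) ∘ₗ (Torsor.rev3 k T) with hF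
    have key : ∀ u v : T ⊗[k] (T ⊗[k] T),
        F (Torsor.mulMidOp k T u v) = Torsor.zMul (F v) (F u) := by
      have h :
          (F ∘ₗ (Torsor.e3 k T).symm.toLinearMap ∘ₗ
              (LinearMap.mul' k (T ⊗[k] (Tᵐᵒᵖ ⊗[k] T))) ∘ₗ
              (TensorProduct.map (Torsor.e3 k T).toLinearMap (Torsor.e3 k T).toLinearMap))
            = ((Torsor.eZ k T).symm.toLinearMap ∘ₗ
              (LinearMap.mul' k (Tᵐᵒᵖ ⊗[k] (T ⊗[k] Tᵐᵒᵖ))) ∘ₗ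
              (TensorProduct.map ((Torsor.eZ k T).toLinearMap ∘ₗ F)
                ((Torsor.eZ k T).toLinearMap ∘ₗ F)) ∘ₗ
              (TensorProduct.comm k (T ⊗[k] (T ⊗[k] T)) (T ⊗[k] (T ⊗[k] T))).toLinearMap) := by
        ext a b c a' b' c'
        simp only [AlgebraTensorModule.curry_apply, TensorProduct.curry_apply,
          LinearMap.coe_restrictScalars, Torsor.e3, Torsor.eZ, Torsor.rev3, hF,
          TensorProduct.congr_tmul, TensorProduct.congr_symm_tmul, LinearEquiv.refl_apply,
          LinearEquiv.refl_symm, MulOpposite.coe_opLinearEquiv,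
          MulOpposite.coe_opLinearEquiv_symm, LinearMap.comp_apply, LinearEquiv.coe_coe,
          TensorProduct.comm_tmul, TensorProduct.assoc_symm_tmul, TensorProduct.assoc_tmul,
          TensorProduct.map_tmul, LinearMap.id_coe, id_eq, LinearMap.mul'_apply,
          Algebra.TensorProduct.tmul_mul_tmul, AlgHom.toLinearMap_apply,
          LinearMap.compr₂_apply, TensorProduct.mk_apply, MulOpposite.unop_op,
          ← MulOpposite.op_mul, map_mul]
      intro u v
      have hv := LinearMap.congr_fun h (u ⊗ₜ[k] v)
      simp only [LinearMap.comp_apply, LinearEquiv.coe_coe, TensorProduct.map_tmul,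
        TensorProduct.comm_tmul, LinearMap.mul'_apply] at hv
      simpa [Torsor.mulMidOp, Torsor.zMul] using hv
    have hst : Torsor.ST qt (x * y) = F (Torsor.mulMidOp k T (qt.μ x) (qt.μ y)) := by
      simp only [Torsor.ST, hF, LinearMap.comp_apply, qt.μ_mul x y]
    rw [hst, key]
    simp only [Torsor.ST, hF, LinearMap.comp_apply]
  · have h1 : Torsor.ST qt 1 =
        (TensorProduct.map qt.θ.toLinearMap
          (TensorProduct.map LinearMap.id qt.θ.toLinearMap)) ((Torsor.rev3 k T) (qt.μ 1)) := rfl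
    rw [h1, qt.μ_one]
    simp [Torsor.rev3]
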